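/- arXiv:2212.00090 — 2 statements merged into one kernel-verified Lean document; each statement's English description precedes it below -/
import Mathlib

section
/- Let N ≥ 1 and let l₀, …, l_{k+1} be integers with |l₀| + ⋯ + |l_k| ≤ N_k, where the sequence (n_j) is defined by n₀ = 1 and n_{j+1} = 2 n_j N_j for nondecreasing positive integers N_j. If l_{k+1} ≠ 0, then |l₀ n₀ + ⋯ + l_k n_k| < |l_{k+1} n_{k+1}|, and hence the sign of l₀ n₀ + ⋯ + l_{k+1} n_{k+1} equals the sign of l_{k+1}. -/
open Finset

lemma sign_helper (a b : ℤ) (h : |a| < |b|) :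
    a + b ≠ 0 ∧ (a + b).sign = b.sign := by
  rcases lt_trichotomy b 0 with hb | hb | hb
  · rw [abs_of_neg hb] at h
    have hab : a + b < 0 := by
      have := abs_lt.mp h
      omega
    constructor
    · omega
    · rw [Int.sign_eq_neg_one_of_neg hab, Int.sign_eq_neg_one_of_neg hb]
  · have := abs_nonneg a; simp [hb] at h; linarith
  · rw [abs_of_pos hb] at h
    have hab : 0 < a + b := by
      have := abs_lt.mp h
      omega
    constructor
    · omega
    · rw [Int.sign_eq_one_of_pos hab, Int.sign_eq_one_of_pos hb]

/-- Let `(N_j)` be nondecreasing positive integers and define `n₀ = 1`,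
`n_{j+1} = 2 n_j N_j`.  If `l₀, …, l_{k+1}` are integers with `|l₀| + ⋯ + |l_k| ≤ N_k` and
`l_{k+1} ≠ 0`, then `|l₀ n₀ + ⋯ + l_k n_k| < |l_{k+1} n_{k+1}|`; hence the total sum
`m = Σ_{j=0}^{k+1} l_j n_j` is nonzero and its sign equals the sign of `l_{k+1}`. -/
theorem stmt12 (N : ℕ → ℕ) (hNpos : ∀ j, 0 < N j) (hNmono : Monotone N)
    (n : ℕ → ℕ) (hn0 : n 0 = 1) (hns : ∀ j, n (j + 1) = 2 * n j * N j)
    (k : ℕ) (l : ℕ → ℤ)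
    (hspec : ∑ j ∈ Finset.range (k + 1), |l j| ≤ (N k : ℤ))
    (hlk : l (k + 1) ≠ 0) :
    |∑ j ∈ Finset.range (k + 1), l j * (n j : ℤ)| < |l (k + 1) * (n (k + 1) : ℤ)| ∧
    (∑ j ∈ Finset.range (k + 2), l j * (n j : ℤ)) ≠ 0 ∧
    (∑ j ∈ Finset.range (k + 2), l j * (n j : ℤ)).sign = (l (k + 1)).sign := by
  have hnpos : ∀ j, 0 < n j := by
    intro j
    induction j with
    | zero => omega
    | succ j ih => rw [hns]; exact Nat.mul_pos (Nat.mul_pos (by omega) ih) (hNpos j)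
  have hnmono : Monotone n := by
    apply monotone_nat_of_le_succ
    intro j
    rw [hns]
    nlinarith [hnpos j, hNpos j]
  -- main bound
  have hbound : |∑ j ∈ Finset.range (k + 1), l j * (n j : ℤ)| < (n (k + 1) : ℤ) := by
    calc |∑ j ∈ Finset.range (k + 1), l j * (n j : ℤ)|
        ≤ ∑ j ∈ Finset.range (k + 1), |l j * (n j : ℤ)| := abs_sum_le_sum_abs _ _
      _ ≤ ∑ j ∈ Finset.range (k + 1), |l j| * (n k : ℤ) := by
          apply Finset.sum_le_sum
          intro j hj
          rw [abs_mul, abs_of_nonneg (by positivity : (0:ℤ) ≤ (n j : ℤ))]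
          have hj' : j ≤ k := by simp at hj; omega
          have : (n j : ℤ) ≤ (n k : ℤ) := by exact_mod_cast hnmono hj'
          nlinarith [abs_nonneg (l j)]
      _ = (∑ j ∈ Finset.range (k + 1), |l j|) * (n k : ℤ) := by
          rw [Finset.sum_mul]
      _ ≤ (N k : ℤ) * (n k : ℤ) := by
          have : (0:ℤ) < (n k : ℤ) := by exact_mod_cast hnpos k
          nlinarith
      _ < (n (k + 1) : ℤ) := by
          rw [hns]
          push_cast
          nlinarith [hnpos k, hNpos k]
  have h1 : |∑ j ∈ Finset.range (k + 1), l j * (n j : ℤ)| < |l (k + 1) * (n (k + 1) : ℤ)| := by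
    rw [abs_mul, abs_of_nonneg (by positivity : (0:ℤ) ≤ (n (k+1) : ℤ))]
    have hl1 : 1 ≤ |l (k + 1)| := Int.one_le_abs hlk
    calc |∑ j ∈ Finset.range (k + 1), l j * (n j : ℤ)| < (n (k + 1) : ℤ) := hbound
      _ = 1 * (n (k + 1) : ℤ) := by ring
      _ ≤ |l (k + 1)| * (n (k + 1) : ℤ) := by
          have : (0:ℤ) ≤ (n (k+1) : ℤ) := by positivity
          nlinarith
  refine ⟨h1, ?_⟩
  rw [Finset.sum_range_succ]
  have := sign_helper _ _ h1
  refine ⟨this.1, ?_⟩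
  rw [this.2, Int.sign_mul]
  have : (n (k + 1) : ℤ).sign = 1 :=
    Int.sign_eq_one_of_pos (by exact_mod_cast hnpos (k + 1))
  rw [this, mul_one]
end

section
/- Let H be the periodic Hilbert transform on 𝕋 (Fourier multiplier -i sign(n)). Fix integers l₀,…,l_{k+1} with l_{k+1} ≠ 0 and |l₀|+⋯+|l_k| ≤ N_k, and let n₀ = 1, n_{j+1} = 2 n_j N_j. Then the function ψ ↦ exp(i Σ_{j=0}^{k+1} l_j (θ_j + n_j ψ)) satisfies H_ψ applied to it equals exp(i Σ_{j=0}^{k} l_j(θ_j + n_j ψ)) · (H e^{i l_{k+1} ·})(θ_{k+1} + n_{k+1} ψ); i.e., the Hilbert transform in ψ acts only on the highest-frequency factor. -/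
open MeasureTheory Real Complex AddCircle Finset

instance : Fact (0 < 2 * Real.pi) := ⟨Real.two_pi_pos⟩

lemma circle_qmp {T : ℝ} [hT : Fact (0 < T)] :
    Measure.QuasiMeasurePreserving (fun ψ : ℝ => (ψ : AddCircle T)) volume
      (@haarAddCircle T _) := by
  have hmeas : Measurable (fun ψ : ℝ => (ψ : AddCircle T)) :=
    (AddCircle.measurePreserving_mk T 0).measurable
  refine ⟨hmeas, Measure.AbsolutelyContinuous.mk fun S hSm hS0 => ?_⟩
  rw [Measure.map_apply hmeas hSm]
  have hvol : (volume : Measure (AddCircle T)) S = 0 := by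
    rw [AddCircle.volume_eq_smul_haarAddCircle, Measure.smul_apply, hS0, smul_zero]
  have hpiece : ∀ t : ℝ,
      volume ((fun ψ : ℝ => (ψ : AddCircle T)) ⁻¹' S ∩ Set.Ioc t (t + T)) = 0 := by
    intro t
    have h1 := (AddCircle.measurePreserving_mk T t).measure_preimage hSm.nullMeasurableSet
    rw [Measure.restrict_apply (hSm.preimage hmeas)] at h1
    rw [h1, hvol]
  have hcover : ((fun ψ : ℝ => (ψ : AddCircle T)) ⁻¹' S) ⊆
      ⋃ j : ℤ, ((fun ψ : ℝ => (ψ : AddCircle T)) ⁻¹' S ∩ Set.Ioc ((j : ℝ) * T) ((j : ℝ) * T + T)) := by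
    intro x hx
    refine Set.mem_iUnion.2 ⟨⌈x / T⌉ - 1, hx, ?_, ?_⟩
    · have h2 : (⌈x / T⌉ : ℝ) < x / T + 1 := Int.ceil_lt_add_one _
      have hx' : x = x / T * T := (div_mul_cancel₀ x hT.out.ne').symm
      push_cast
      nlinarith [hT.out]
    · have h1 : x / T ≤ ⌈x / T⌉ := Int.le_ceil _
      have hx' : x = x / T * T := (div_mul_cancel₀ x hT.out.ne').symm
      push_cast
      nlinarith [hT.out]
  exact measure_mono_null hcover (measure_iUnion_null fun j => hpiece _)

lemma ae_haar_of_ae_real {T : ℝ} [hT : Fact (0 < T)] {P : AddCircle T → Prop}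
    (hP : MeasurableSet {x | P x}) (h : ∀ᵐ ψ : ℝ, P (ψ : AddCircle T)) :
    ∀ᵐ x ∂(@haarAddCircle T _), P x := by
  rw [ae_iff] at h ⊢
  have hmeas : Measurable (fun ψ : ℝ => (ψ : AddCircle T)) :=
    (AddCircle.measurePreserving_mk T 0).measurable
  have hPc : MeasurableSet {x : AddCircle T | ¬ P x} := hP.compl
  have key := (AddCircle.measurePreserving_mk T 0).measure_preimage hPc.nullMeasurableSet
  have hvol : (volume : Measure (AddCircle T)) {x | ¬ P x} = 0 := by
    rw [← key]
    refine le_antisymm (le_trans (Measure.restrict_le_self _) ?_) zero_le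
    exact le_of_eq h
  rw [AddCircle.volume_eq_smul_haarAddCircle, Measure.smul_apply, smul_eq_mul] at hvol
  have hT0 : (ENNReal.ofReal T) ≠ 0 := by
    simp [ENNReal.ofReal_eq_zero, not_le, hT.out]
  exact (mul_eq_zero.mp hvol).resolve_left hT0

lemma affine_qmp (a b : ℝ) (hb : b ≠ 0) :
    Measure.QuasiMeasurePreserving (fun ψ : ℝ => a + b * ψ) volume volume := by
  have h1 : MeasurePreserving (fun x : ℝ => a + x) volume volume :=
    measurePreserving_add_left volume a
  have h2 : Measure.QuasiMeasurePreserving (fun x : ℝ => b * x) volume volume := by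
    refine ⟨(measurable_const_mul b), ?_⟩
    rw [show (fun x : ℝ => b * x) = (b * ·) from rfl, Real.map_volume_mul_left hb]
    exact Measure.AbsolutelyContinuous.mk fun s hs h0 => by
      simp [Measure.smul_apply, h0]
  exact h1.quasiMeasurePreserving.comp h2

/-- Let `H` be the periodic Hilbert transform on `𝕋` (Fourier multiplier `-i sign(n)`).
Fix integers `l₀, …, l_{k+1}` with `l_{k+1} ≠ 0` and `|l₀| + ⋯ + |l_k| ≤ N_k`, and let
`n₀ = 1`, `n_{j+1} = 2 n_j N_j`.  Then for the function
`ψ ↦ exp(i Σ_{j=0}^{k+1} l_j (θ_j + n_j ψ))` the Hilbert transform in `ψ` acts only on the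
highest-frequency factor:
`H_ψ F (ψ) = exp(i Σ_{j=0}^{k} l_j (θ_j + n_j ψ)) · (H e^{i l_{k+1}·})(θ_{k+1} + n_{k+1} ψ)`. -/
theorem stmt13
    (H : Lp ℂ 2 (@haarAddCircle (2 * Real.pi) _) →L[ℂ] Lp ℂ 2 (@haarAddCircle (2 * Real.pi) _))
    (hH : ∀ n : ℤ, H (fourierLp 2 n) = ((-Complex.I) * (Int.sign n : ℂ)) • fourierLp 2 n)
    (N : ℕ → ℕ) (hNpos : ∀ j, 0 < N j)
    (n : ℕ → ℕ) (hn0 : n 0 = 1) (hns : ∀ j, n (j + 1) = 2 * n j * N j)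
    (k : ℕ) (l : ℕ → ℤ)
    (hspec : ∑ j ∈ Finset.range (k + 1), |l j| ≤ (N k : ℤ))
    (hlk : l (k + 1) ≠ 0)
    (θ : ℕ → ℝ)
    (F : Lp ℂ 2 (@haarAddCircle (2 * Real.pi) _))
    (hF : ∀ᵐ ψ : ℝ, F (ψ : AddCircle (2 * Real.pi))
      = Complex.exp (Complex.I *
          ∑ j ∈ Finset.range (k + 2), (l j : ℂ) * ((θ j + (n j : ℝ) * ψ : ℝ) : ℂ))) :
    ∀ᵐ ψ : ℝ, (H F) (ψ : AddCircle (2 * Real.pi))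
      = Complex.exp (Complex.I *
          ∑ j ∈ Finset.range (k + 1), (l j : ℂ) * ((θ j + (n j : ℝ) * ψ : ℝ) : ℂ))
        * (H (fourierLp 2 (l (k + 1))))
            (((θ (k + 1) + (n (k + 1) : ℝ) * ψ : ℝ)) : AddCircle (2 * Real.pi)) := by
  have hπ : (0 : ℝ) < 2 * Real.pi := Real.two_pi_pos
  -- positivity and monotonicity of n
  have hnpos : ∀ j, 0 < n j := by
    intro j; induction j with
    | zero => simp [hn0]
    | succ j ih => rw [hns]; exact Nat.mul_pos (Nat.mul_pos (by norm_num) ih) (hNpos j)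
  have hmono : Monotone n := by
    apply monotone_nat_of_le_succ
    intro j
    rw [hns j]
    have h1 := hNpos j
    nlinarith [hnpos j]
  set m : ℤ := ∑ j ∈ Finset.range (k + 2), l j * (n j : ℤ) with hm
  set c : ℂ := Complex.exp (Complex.I * ∑ j ∈ Finset.range (k + 2), (l j : ℂ) * (θ j : ℂ))
    with hc
  -- bound on lower-order frequencies
  have habs : |∑ j ∈ Finset.range (k + 1), l j * (n j : ℤ)| < (n (k + 1) : ℤ) := by
    calc |∑ j ∈ Finset.range (k + 1), l j * (n j : ℤ)|
        ≤ ∑ j ∈ Finset.range (k + 1), |l j * (n j : ℤ)| := Finset.abs_sum_le_sum_abs _ _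
    _ = ∑ j ∈ Finset.range (k + 1), |l j| * (n j : ℤ) := by
        refine Finset.sum_congr rfl fun j _ => ?_
        rw [abs_mul, abs_of_nonneg (by positivity : (0:ℤ) ≤ (n j : ℤ))]
    _ ≤ ∑ j ∈ Finset.range (k + 1), |l j| * (n k : ℤ) := by
        refine Finset.sum_le_sum fun j hj => ?_
        have h := hmono (Nat.le_of_lt_succ (Finset.mem_range.mp hj))
        exact mul_le_mul_of_nonneg_left (by exact_mod_cast h) (abs_nonneg _)
    _ = (∑ j ∈ Finset.range (k + 1), |l j|) * (n k : ℤ) := (Finset.sum_mul _ _ _).symm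
    _ ≤ (N k : ℤ) * (n k : ℤ) := mul_le_mul_of_nonneg_right hspec (by positivity)
    _ < (n (k + 1) : ℤ) := by
        rw [hns k]; push_cast
        have h1 : (0:ℤ) < (n k : ℤ) := by exact_mod_cast hnpos k
        have h2 : (0:ℤ) < (N k : ℤ) := by exact_mod_cast hNpos k
        nlinarith
  have hBle : (n (k + 1) : ℤ) ≤ |l (k + 1) * (n (k + 1) : ℤ)| := by
    rw [abs_mul, abs_of_nonneg (by positivity : (0:ℤ) ≤ ((n (k + 1) : ℤ)))]
    have h1 : 1 ≤ |l (k + 1)| := Int.one_le_abs hlk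
    have h2 : (0:ℤ) < (n (k + 1) : ℤ) := by exact_mod_cast hnpos (k + 1)
    nlinarith
  have hmsplit : m = (∑ j ∈ Finset.range (k + 1), l j * (n j : ℤ))
      + l (k + 1) * (n (k + 1) : ℤ) := by
    rw [hm, Finset.sum_range_succ]
  have hsign : Int.sign m = Int.sign (l (k + 1)) := by
    have hnk1 : (0:ℤ) < (n (k + 1) : ℤ) := by exact_mod_cast hnpos (k + 1)
    have habs' := abs_lt.mp habs
    rcases lt_or_gt_of_ne hlk with hneg | hpos
    · have hB : l (k + 1) * (n (k + 1) : ℤ) < 0 := mul_neg_of_neg_of_pos hneg hnk1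
      have hBabs : |l (k + 1) * (n (k + 1) : ℤ)| = -(l (k + 1) * (n (k + 1) : ℤ)) :=
        abs_of_neg hB
      have : m < 0 := by rw [hmsplit]; rw [hBabs] at hBle; linarith [habs'.2]
      rw [Int.sign_eq_neg_one_of_neg this, Int.sign_eq_neg_one_of_neg hneg]
    · have hB : 0 < l (k + 1) * (n (k + 1) : ℤ) := mul_pos hpos hnk1
      have hBabs : |l (k + 1) * (n (k + 1) : ℤ)| = l (k + 1) * (n (k + 1) : ℤ) :=
        abs_of_pos hB
      have : 0 < m := by rw [hmsplit]; rw [hBabs] at hBle; linarith [habs'.1]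
      rw [Int.sign_eq_one_of_pos this, Int.sign_eq_one_of_pos hpos]
  -- key pointwise exponential identity
  have key : ∀ ψ : ℝ,
      Complex.exp (Complex.I *
          ∑ j ∈ Finset.range (k + 2), (l j : ℂ) * ((θ j + (n j : ℝ) * ψ : ℝ) : ℂ))
        = c * Complex.exp (Complex.I * (m : ℂ) * (ψ : ℂ)) := by
    intro ψ
    rw [hc, ← Complex.exp_add]
    congr 1
    have hterm : ∀ j, (l j : ℂ) * ((θ j + (n j : ℝ) * ψ : ℝ) : ℂ)
        = (l j : ℂ) * (θ j : ℂ) + ((l j * (n j : ℤ) : ℤ) : ℂ) * (ψ : ℂ) := by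
      intro j; push_cast; ring
    rw [Finset.sum_congr rfl fun j _ => hterm j, Finset.sum_add_distrib, ← Finset.sum_mul,
      ← Int.cast_sum, ← hm]
    ring
  -- evaluation of fourier
  have hfour : ∀ (q : ℤ) (x : ℝ), fourier q (x : AddCircle (2 * Real.pi))
      = Complex.exp (Complex.I * (q : ℂ) * (x : ℂ)) := by
    intro q x
    rw [fourier_coe_apply]
    congr 1
    have hpi : (Real.pi : ℂ) ≠ 0 := Complex.ofReal_ne_zero.mpr Real.pi_ne_zero
    push_cast
    field_simp
  -- identify F as an Lp element
  have hqmp := @circle_qmp (2 * Real.pi) ⟨hπ⟩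
  have hFm := MeasureTheory.Lp.aestronglyMeasurable F
  have hf'_sm : MeasureTheory.StronglyMeasurable (hFm.mk ⇑F) := hFm.stronglyMeasurable_mk
  have hf'_ae : ⇑F =ᵐ[@haarAddCircle (2 * Real.pi) _] hFm.mk ⇑F := hFm.ae_eq_mk
  have h1 : ∀ᵐ ψ : ℝ, F (ψ : AddCircle (2 * Real.pi)) = hFm.mk ⇑F (ψ : AddCircle (2 * Real.pi)) :=
    hqmp.ae hf'_ae
  have h2 : ∀ᵐ ψ : ℝ, hFm.mk ⇑F (ψ : AddCircle (2 * Real.pi))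
      = c * fourier m (ψ : AddCircle (2 * Real.pi)) := by
    filter_upwards [h1, hF] with ψ e1 e2
    rw [← e1, e2, key ψ, hfour]
  have h3 : ∀ᵐ x ∂(@haarAddCircle (2 * Real.pi) _), hFm.mk ⇑F x = c * fourier m x := by
    refine ae_haar_of_ae_real ?_ h2
    exact hf'_sm.measurableSet_eq_fun
      (((fourier m).continuous.const_smul c).stronglyMeasurable)
  have hFae : ⇑F =ᵐ[@haarAddCircle (2 * Real.pi) _] fun x => c * fourier m x :=
    hf'_ae.trans h3
  have hFeq : F = c • (fourierLp 2 m : Lp ℂ 2 (@haarAddCircle (2 * Real.pi) _)) := by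
    apply MeasureTheory.Lp.ext
    refine hFae.trans ?_
    have hs := MeasureTheory.Lp.coeFn_smul c (fourierLp 2 m :
      Lp ℂ 2 (@haarAddCircle (2 * Real.pi) _))
    have hfl := coeFn_fourierLp 2 m (T := 2 * Real.pi)
    filter_upwards [hs, hfl] with x e1 e2
    rw [e1, Pi.smul_apply, e2, smul_eq_mul]
  -- compute H F
  have hHF : H F = (c * (-Complex.I * (Int.sign m : ℂ))) • fourierLp 2 m := by
    rw [hFeq, _root_.map_smul, hH m, smul_smul]
  have h4 : ∀ᵐ x ∂(@haarAddCircle (2 * Real.pi) _),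
      (H F) x = (c * (-Complex.I * (Int.sign m : ℂ))) * fourier m x := by
    have hs := MeasureTheory.Lp.coeFn_smul (c * (-Complex.I * (Int.sign m : ℂ)))
      (fourierLp 2 m : Lp ℂ 2 (@haarAddCircle (2 * Real.pi) _))
    have hfl := coeFn_fourierLp 2 m (T := 2 * Real.pi)
    rw [hHF]
    filter_upwards [hs, hfl] with x e1 e2
    rw [e1, Pi.smul_apply, e2, smul_eq_mul]
  have h5 := hqmp.ae h4
  -- the Hilbert transform of the top frequency
  have hHl : ∀ᵐ x ∂(@haarAddCircle (2 * Real.pi) _),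
      (H (fourierLp 2 (l (k + 1)))) x
        = (-Complex.I * (Int.sign (l (k + 1)) : ℂ)) * fourier (l (k + 1)) x := by
    have hs := MeasureTheory.Lp.coeFn_smul (-Complex.I * (Int.sign (l (k + 1)) : ℂ))
      (fourierLp 2 (l (k + 1)) : Lp ℂ 2 (@haarAddCircle (2 * Real.pi) _))
    have hfl := coeFn_fourierLp 2 (l (k + 1)) (T := 2 * Real.pi)
    rw [hH (l (k + 1))]
    filter_upwards [hs, hfl] with x e1 e2
    rw [e1, Pi.smul_apply, e2, smul_eq_mul]
  have hnk1R : ((n (k + 1) : ℝ)) ≠ 0 := by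
    exact_mod_cast (hnpos (k + 1)).ne'
  have hcomp := hqmp.comp (affine_qmp (θ (k + 1)) ((n (k + 1) : ℝ)) hnk1R)
  have h6 := hcomp.ae hHl
  -- put everything together
  filter_upwards [h5, h6] with ψ e5 e6
  simp only [Function.comp_apply] at e5 e6
  rw [e5, e6, hfour, hfour, hsign]
  have hkey := key ψ
  rw [Finset.sum_range_succ, mul_add, Complex.exp_add] at hkey
  rw [← mul_assoc Complex.I ((l (k + 1) : ℂ))] at hkey
  linear_combination (Complex.I * ((Int.sign (l (k + 1)) : ℂ))) * hkey
end
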